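/- arXiv:0906.0434 — 5 statements merged into one kernel-verified Lean document; each statement's English description precedes it below -/
import Mathlib

section
/- Suppose y1 ≥ y2 and y1 − y2 > aλ. Then (θ1, θ2) = (y1, y2) is the unique global minimizer over ℝ² of the two-pixel SCAD objective Q(θ1, θ2) = (y1 − θ1)² + (y2 − θ2)² + p_λ(|θ1 − θ2|). -/
/-- The SCAD penalty function `p_λ` with parameters `a` and `lam = λ`. -/
noncomputable def scadPen (a lam θ : ℝ) : ℝ :=
  if θ ≤ lam then lam * θ
  else if θ ≤ a * lam then (2 * a * lam * θ - θ ^ 2 - lam ^ 2) / (2 * (a - 1))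
  else (a + 1) * lam ^ 2 / 2

/-- The derivative `p'_λ` of the SCAD penalty (with the convention `p'_λ(0) = λ`). -/
noncomputable def scadDeriv (a lam θ : ℝ) : ℝ :=
  if θ ≤ lam then lam
  else if θ ≤ a * lam then (a * lam - θ) / (a - 1)
  else 0

/-- The two-pixel SCAD objective `Q(θ1, θ2)`. -/
noncomputable def scadQ (a lam y1 y2 θ1 θ2 : ℝ) : ℝ :=
  (y1 - θ1) ^ 2 + (y2 - θ2) ^ 2 + scadPen a lam |θ1 - θ2|

/-!
At the data the gap exceeds `aλ`, so the penalty sits at its cap `(a+1)λ²/2` and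
`Q(y1, y2)` equals that cap. Moving to `θ` costs the fidelity `u² + v²`, with
`u = y1 - θ1`, `v = y2 - θ2`, while the gap `t = |θ1 - θ2|` drops by at most `|u| + |v|`.
Below `aλ` the penalty lies under its cap by at most `(aλ - t)²/(2(a-1)) ≤ (|u| + |v|)²/2`
(the SCAD penalty is the cap minus a quadratic on `[λ, aλ]` and lies above that quadratic
on `[0, λ]`), and `(|u| + |v|)²/2 ≤ u² + v²`, with strict inequality in the first step
unless `θ = y`.
-/

lemma scadPen_of_lt {a lam θ : ℝ} (ha : 1 ≤ a) (hlam : 0 ≤ lam) (h : a * lam < θ) :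
    scadPen a lam θ = (a + 1) * lam ^ 2 / 2 := by
  have hlam_le : lam ≤ a * lam := le_mul_of_one_le_left hlam ha
  rw [scadPen, if_neg (by linarith), if_neg h.not_ge]

lemma sub_scadPen_le {a lam t : ℝ} (ha : 1 < a) (ht : t ≤ a * lam) :
    (a + 1) * lam ^ 2 / 2 - scadPen a lam t ≤ (a * lam - t) ^ 2 / (2 * (a - 1)) := by
  have ha1 : 0 < 2 * (a - 1) := by linarith
  unfold scadPen
  split_ifs with h_lam
  · rw [le_div_iff₀ ha1]
    nlinarith [sq_nonneg (t - lam)]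
  · have ha1' : a - 1 ≠ 0 := by linarith
    exact le_of_eq (by field_simp; ring)

lemma sub_scadPen_lt_sq_div_two {a lam t r : ℝ} (ha : 2 ≤ a) (hlam : 0 ≤ lam) (hr : 0 < r)
    (h : a * lam < t + r) : (a + 1) * lam ^ 2 / 2 - scadPen a lam t < r ^ 2 / 2 := by
  rcases le_or_gt t (a * lam) with ht | ht
  · have hsq : (a * lam - t) ^ 2 < r ^ 2 := by nlinarith
    calc (a + 1) * lam ^ 2 / 2 - scadPen a lam t
        ≤ (a * lam - t) ^ 2 / (2 * (a - 1)) := sub_scadPen_le (by linarith) ht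
      _ ≤ (a * lam - t) ^ 2 / 2 := by gcongr; linarith
      _ < r ^ 2 / 2 := by gcongr
  · rw [scadPen_of_lt (by linarith) hlam ht, sub_self]
    positivity

theorem scad_two_pixel_large_gap_minimizer_general
    (a lam y1 y2 : ℝ) (ha : 2 < a) (hlam : 0 < lam)
    (hgap : a * lam < y1 - y2) :
    ∀ θ1 θ2 : ℝ, (θ1, θ2) ≠ (y1, y2) →
      scadQ a lam y1 y2 y1 y2 < scadQ a lam y1 y2 θ1 θ2 := by
  intro θ1 θ2 hne
  set r := |y1 - θ1| + |y2 - θ2|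
  have hr : 0 < r := by
    by_contra! hr
    refine hne (Prod.ext ?_ ?_) <;> dsimp only <;>
      linarith [abs_nonneg (y1 - θ1), abs_nonneg (y2 - θ2), le_abs_self (y1 - θ1),
        neg_abs_le (y1 - θ1), le_abs_self (y2 - θ2), neg_abs_le (y2 - θ2)]
  have htriangle : a * lam < |θ1 - θ2| + r := by
    linarith [le_abs_self (θ1 - θ2), le_abs_self (y1 - θ1), neg_abs_le (y2 - θ2)]
  have hdeficit := sub_scadPen_lt_sq_div_two ha.le hlam.le hr htriangle
  have hfidelity : r ^ 2 / 2 ≤ (y1 - θ1) ^ 2 + (y2 - θ2) ^ 2 := by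
    have := add_sq_le (a := |y1 - θ1|) (b := |y2 - θ2|)
    rw [sq_abs, sq_abs] at this
    linarith
  have hcap : scadQ a lam y1 y2 y1 y2 = (a + 1) * lam ^ 2 / 2 := by
    rw [scadQ, abs_of_pos (by nlinarith), scadPen_of_lt (by linarith) hlam.le hgap]
    ring
  rw [hcap, scadQ]
  linarith

/-- If `y1 ≥ y2` and `y1 − y2 > aλ`, then `(y1, y2)` is the unique global minimizer of the
two-pixel SCAD objective `Q`. -/
theorem scad_two_pixel_large_gap_minimizer
    (a lam y1 y2 : ℝ) (ha : 2 < a) (hlam : 0 < lam)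
    (hy : y2 ≤ y1) (hgap : a * lam < y1 - y2) :
    ∀ θ1 θ2 : ℝ, (θ1, θ2) ≠ (y1, y2) →
      scadQ a lam y1 y2 y1 y2 < scadQ a lam y1 y2 θ1 θ2 :=
  scad_two_pixel_large_gap_minimizer_general a lam y1 y2 ha hlam hgap
end

section
/- Suppose y1 ≥ y2 and y1 − y2 < λ (note that λ equals the minimum over ξ ∈ ℝ of |ξ| + p'_λ(|ξ|)). Then (θ1, θ2) = ((y1 + y2)/2, (y1 + y2)/2) is the unique global minimizer over ℝ² of the two-pixel SCAD objective Q(θ1, θ2) = (y1 − θ1)² + (y2 − θ2)² + p_λ(|θ1 − θ2|). -/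
/-!
Rotating coordinates to the sum `θ1 + θ2` and the difference `θ1 - θ2` splits `Q` into a
quadratic in the sum, minimized at `y1 + y2`, plus the one-dimensional problem
`s ↦ (d - s)² / 2 + p_λ(|s|)` with `d = y1 - y2`. Since `θ ↦ p_λ(θ) + θ² / 2` dominates `λθ`
(this is `min_ξ |ξ| + p'_λ(|ξ|) = λ` in integrated form), the gap `|d| < λ` forces the
one-dimensional problem to have `s = 0` as its unique minimizer.
-/

theorem scadPen_zero {a lam : ℝ} (hlam : 0 ≤ lam) : scadPen a lam 0 = 0 := by
  simp [scadPen, hlam]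

theorem mul_sub_sq_div_two_le_scadPen {a : ℝ} (lam θ : ℝ) (ha : 2 ≤ a) :
    lam * θ - θ ^ 2 / 2 ≤ scadPen a lam θ := by
  unfold scadPen
  split_ifs with hθlam hθa
  · nlinarith [sq_nonneg θ]
  · rw [le_div_iff₀ (by linarith)]
    nlinarith [mul_nonneg (sub_nonneg.2 ha) (sq_nonneg θ)]
  · nlinarith [sq_nonneg (θ - lam), sq_nonneg lam]

theorem sq_div_two_lt_sq_sub_div_two_add_scadPen {a lam d s : ℝ} (ha : 2 ≤ a)
    (hd : |d| < lam) (hs : s ≠ 0) :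
    d ^ 2 / 2 < (d - s) ^ 2 / 2 + scadPen a lam |s| := by
  have hpen := mul_sub_sq_div_two_le_scadPen lam |s| ha
  have hds : d * s < lam * |s| :=
    calc d * s ≤ |d| * |s| := by rw [← abs_mul]; exact le_abs_self _
      _ < lam * |s| := mul_lt_mul_of_pos_right hd (abs_pos.2 hs)
  nlinarith [sq_abs s]

theorem scad_two_pixel_small_gap_minimizer_general
    (a lam y1 y2 : ℝ) (ha : 2 < a)
    (hy : y2 ≤ y1) (hgap : y1 - y2 < lam) :
    ∀ θ1 θ2 : ℝ, (θ1, θ2) ≠ ((y1 + y2) / 2, (y1 + y2) / 2) →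
      scadQ a lam y1 y2 ((y1 + y2) / 2) ((y1 + y2) / 2) < scadQ a lam y1 y2 θ1 θ2 := by
  intro θ1 θ2 hne
  have hsplit : ∀ u v, scadQ a lam y1 y2 u v = (y1 + y2 - (u + v)) ^ 2 / 2
      + ((y1 - y2 - (u - v)) ^ 2 / 2 + scadPen a lam |u - v|) := by
    intro u v
    unfold scadQ
    ring
  have hd : |y1 - y2| < lam := by rwa [abs_of_nonneg (sub_nonneg.2 hy)]
  rw [hsplit, hsplit, sub_self, abs_zero, scadPen_zero (by linarith), add_halves, sub_self,
    sub_zero]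
  by_cases hs : θ1 = θ2
  · subst hs
    have hsum : y1 + y2 - (θ1 + θ1) ≠ 0 := fun h ↦ hne (by ext <;> simp <;> linarith)
    rw [sub_self, abs_zero, scadPen_zero (by linarith), sub_zero]
    nlinarith [sq_pos_of_ne_zero hsum]
  · have := sq_div_two_lt_sq_sub_div_two_add_scadPen ha.le hd (sub_ne_zero.2 hs)
    nlinarith [sq_nonneg (y1 + y2 - (θ1 + θ2))]

/-- If `y1 ≥ y2` and `y1 − y2 < λ`, then `((y1+y2)/2, (y1+y2)/2)` is the unique global
minimizer of the two-pixel SCAD objective `Q`. -/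
theorem scad_two_pixel_small_gap_minimizer
    (a lam y1 y2 : ℝ) (ha : 2 < a) (hlam : 0 < lam)
    (hy : y2 ≤ y1) (hgap : y1 - y2 < lam) :
    ∀ θ1 θ2 : ℝ, (θ1, θ2) ≠ ((y1 + y2) / 2, (y1 + y2) / 2) →
      scadQ a lam y1 y2 ((y1 + y2) / 2) ((y1 + y2) / 2) < scadQ a lam y1 y2 θ1 θ2 :=
  scad_two_pixel_small_gap_minimizer_general a lam y1 y2 ha hy hgap
end

section
/- Suppose y1 ≥ y2 and y1 − y2 > λ. Then (θ1, θ2) = (y1 − λ/2, y2 + λ/2) is the unique global minimizer over ℝ² of the two-pixel TV objective Q_TV(θ1, θ2) = (y1 − θ1)² + (y2 − θ2)² + λ|θ1 − θ2|. -/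
/-- The two-pixel TV objective `Q_TV(θ1, θ2)`. -/
noncomputable def tvQ (lam y1 y2 θ1 θ2 : ℝ) : ℝ :=
  (y1 - θ1) ^ 2 + (y2 - θ2) ^ 2 + lam * |θ1 - θ2|

/-!
Since `λ|t| ≥ λt`, the objective is bounded below by the quadratic
`(y1 - θ1)² + (y2 - θ2)² + λ(θ1 - θ2)`, with equality on the half-plane `θ1 ≥ θ2`.
Completing the square, this quadratic is `‖θ - θ*‖²` plus a constant, where
`θ* = (y1 - λ/2, y2 + λ/2)`, and the gap condition `y1 - y2 > λ` puts `θ*` in that half-plane.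
-/

lemma sq_add_sq_sub_pos_of_ne {a b c d : ℝ} (h : (a, b) ≠ (c, d)) :
    0 < (a - c) ^ 2 + (b - d) ^ 2 := by
  by_cases hac : a = c
  · have hbd : b - d ≠ 0 := sub_ne_zero.mpr fun hbd => h (by rw [hac, hbd])
    positivity
  · have : a - c ≠ 0 := sub_ne_zero.mpr hac
    positivity

lemma tvQ_eq_of_le {lam y1 y2 θ1 θ2 : ℝ} (h : θ2 ≤ θ1) :
    tvQ lam y1 y2 θ1 θ2 = (θ1 - (y1 - lam / 2)) ^ 2 + (θ2 - (y2 + lam / 2)) ^ 2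
      + (lam * (y1 - y2) - lam ^ 2 / 2) := by
  rw [tvQ, abs_of_nonneg (sub_nonneg.mpr h)]
  ring

lemma le_tvQ {lam : ℝ} (hlam : 0 ≤ lam) (y1 y2 θ1 θ2 : ℝ) :
    (θ1 - (y1 - lam / 2)) ^ 2 + (θ2 - (y2 + lam / 2)) ^ 2 + (lam * (y1 - y2) - lam ^ 2 / 2)
      ≤ tvQ lam y1 y2 θ1 θ2 := by
  have : lam * (θ1 - θ2) ≤ lam * |θ1 - θ2| := mul_le_mul_of_nonneg_left (le_abs_self _) hlam
  rw [tvQ]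
  linarith

theorem tv_two_pixel_large_gap_minimizer_general
    (lam y1 y2 : ℝ) (hlam : 0 < lam)
    (hgap : lam < y1 - y2) :
    ∀ θ1 θ2 : ℝ, (θ1, θ2) ≠ (y1 - lam / 2, y2 + lam / 2) →
      tvQ lam y1 y2 (y1 - lam / 2) (y2 + lam / 2) < tvQ lam y1 y2 θ1 θ2 := by
  intro θ1 θ2 hne
  rw [tvQ_eq_of_le (by linarith), sub_self, sub_self]
  calc _ < (θ1 - (y1 - lam / 2)) ^ 2 + (θ2 - (y2 + lam / 2)) ^ 2
          + (lam * (y1 - y2) - lam ^ 2 / 2) := by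
        linarith [sq_add_sq_sub_pos_of_ne hne]
    _ ≤ tvQ lam y1 y2 θ1 θ2 := le_tvQ hlam.le y1 y2 θ1 θ2

/-- If `y1 ≥ y2` and `y1 − y2 > λ`, then `(y1 − λ/2, y2 + λ/2)` is the unique global
minimizer of the two-pixel TV objective `Q_TV`. -/
theorem tv_two_pixel_large_gap_minimizer
    (lam y1 y2 : ℝ) (hlam : 0 < lam)
    (hy : y2 ≤ y1) (hgap : lam < y1 - y2) :
    ∀ θ1 θ2 : ℝ, (θ1, θ2) ≠ (y1 - lam / 2, y2 + lam / 2) →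
      tvQ lam y1 y2 (y1 - lam / 2) (y2 + lam / 2) < tvQ lam y1 y2 θ1 θ2 :=
  tv_two_pixel_large_gap_minimizer_general lam y1 y2 hlam hgap
end

section
/- Monotone descent property of the majorization–minimization iteration for the SCAD-penalized functional: let f ∈ ℝ^N, let g_1, …, g_m : ℝ^N → [0, ∞) be arbitrary nonnegative functions, and define F(u) = ‖f − u‖² + Σ_{i=1}^m p_λ(g_i(u)). Fix v ∈ ℝ^N and suppose u' minimizes over u ∈ ℝ^N the surrogate functional G(u) = ‖f − u‖² + Σ_{i=1}^m p'_λ(g_i(v)) · g_i(u). Then F(u') ≤ F(v). -/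
/-!
The SCAD penalty is concave, and `p'_λ` is a supergradient of it, so each `p_λ(gᵢ(u))` lies
below its tangent line at `gᵢ(v)`. Summing, `F(u) − F(v) ≤ G(u) − G(v)` for every `u`, and
`G(u') ≤ G(v)` because `u'` minimizes `G`.
-/

section SCAD

variable {a lam : ℝ}

/- Nine cases (piece of `θ₀` × piece of `θ`); in each the tangent gap is a square or a product
of two factors of equal sign over `2(a − 1)`, or a comparison of the linear and constant pieces. -/
theorem scadPen_le_add_scadDeriv_mul (ha : 1 < a) (hlam : 0 ≤ lam) (θ θ₀ : ℝ) :
    scadPen a lam θ ≤ scadPen a lam θ₀ + scadDeriv a lam θ₀ * (θ - θ₀) := by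
  have hden : 0 < 2 * (a - 1) := by linarith
  have hne : a - 1 ≠ 0 := by linarith
  have hsq : 0 ≤ (a - 1) * lam ^ 2 := by positivity
  unfold scadPen scadDeriv
  rw [← sub_nonneg]
  split_ifs with _ h h' _ h h' h h'
  · linarith
  · rw [show lam * θ₀ + lam * (θ - θ₀) - (2 * a * lam * θ - θ ^ 2 - lam ^ 2) / (2 * (a - 1))
        = (θ - lam) ^ 2 / (2 * (a - 1)) by field_simp; ring]
    positivity
  · nlinarith [mul_le_mul_of_nonneg_left (not_le.mp h').le hlam]
  · rw [show (2 * a * lam * θ₀ - θ₀ ^ 2 - lam ^ 2) / (2 * (a - 1))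
        + (a * lam - θ₀) / (a - 1) * (θ - θ₀) - lam * θ
        = (θ₀ - lam) * (θ₀ + lam - 2 * θ) / (2 * (a - 1)) by field_simp; ring]
    exact div_nonneg (by nlinarith) hden.le
  · rw [show (2 * a * lam * θ₀ - θ₀ ^ 2 - lam ^ 2) / (2 * (a - 1))
        + (a * lam - θ₀) / (a - 1) * (θ - θ₀)
        - (2 * a * lam * θ - θ ^ 2 - lam ^ 2) / (2 * (a - 1))
        = (θ - θ₀) ^ 2 / (2 * (a - 1)) by field_simp; ring]
    positivity
  · rw [show (2 * a * lam * θ₀ - θ₀ ^ 2 - lam ^ 2) / (2 * (a - 1))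
        + (a * lam - θ₀) / (a - 1) * (θ - θ₀) - (a + 1) * lam ^ 2 / 2
        = (a * lam - θ₀) * (2 * θ - θ₀ - a * lam) / (2 * (a - 1)) by field_simp; ring]
    exact div_nonneg (by nlinarith) hden.le
  · nlinarith [mul_le_mul_of_nonneg_left h hlam]
  · rw [show (a + 1) * lam ^ 2 / 2 + 0 * (θ - θ₀)
        - (2 * a * lam * θ - θ ^ 2 - lam ^ 2) / (2 * (a - 1))
        = (θ - a * lam) ^ 2 / (2 * (a - 1)) by field_simp; ring]
    positivity
  · linarith

theorem sum_scadPen_sub_le {ι : Type*} (ha : 1 < a) (hlam : 0 ≤ lam) (s : Finset ι)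
    (x y : ι → ℝ) :
    ∑ i ∈ s, scadPen a lam (x i) - ∑ i ∈ s, scadPen a lam (y i)
      ≤ ∑ i ∈ s, scadDeriv a lam (y i) * x i - ∑ i ∈ s, scadDeriv a lam (y i) * y i := by
  rw [← Finset.sum_sub_distrib, ← Finset.sum_sub_distrib]
  refine Finset.sum_le_sum fun i _ => ?_
  linarith [scadPen_le_add_scadDeriv_mul ha hlam (x i) (y i),
    mul_sub (scadDeriv a lam (y i)) (x i) (y i)]

end SCAD

theorem scad_mm_descent_general
    (a lam : ℝ) (ha : 2 < a) (hlam : 0 < lam) (N m : ℕ)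
    (f : EuclideanSpace ℝ (Fin N)) (g : Fin m → EuclideanSpace ℝ (Fin N) → ℝ)
    (v u' : EuclideanSpace ℝ (Fin N))
    (hmin : ∀ u : EuclideanSpace ℝ (Fin N),
        ‖f - u'‖ ^ 2 + ∑ i, scadDeriv a lam (g i v) * g i u'
          ≤ ‖f - u‖ ^ 2 + ∑ i, scadDeriv a lam (g i v) * g i u) :
    ‖f - u'‖ ^ 2 + ∑ i, scadPen a lam (g i u')
      ≤ ‖f - v‖ ^ 2 + ∑ i, scadPen a lam (g i v) := by
  have hpen := sum_scadPen_sub_le (a := a) (by linarith) hlam.le Finset.univ (g · u') (g · v)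
  linarith [hmin v]

/-- Monotone descent property of the MM iteration for the SCAD-penalized functional:
if `u'` minimizes the surrogate `G(u) = ‖f − u‖² + Σᵢ p'_λ(gᵢ(v)) gᵢ(u)`, then
`F(u') ≤ F(v)` where `F(u) = ‖f − u‖² + Σᵢ p_λ(gᵢ(u))`. -/
theorem scad_mm_descent
    (a lam : ℝ) (ha : 2 < a) (hlam : 0 < lam) (N m : ℕ)
    (f : EuclideanSpace ℝ (Fin N)) (g : Fin m → EuclideanSpace ℝ (Fin N) → ℝ)
    (hg : ∀ i u, 0 ≤ g i u) (v u' : EuclideanSpace ℝ (Fin N))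
    (hmin : ∀ u : EuclideanSpace ℝ (Fin N),
        ‖f - u'‖ ^ 2 + ∑ i, scadDeriv a lam (g i v) * g i u'
          ≤ ‖f - u‖ ^ 2 + ∑ i, scadDeriv a lam (g i v) * g i u) :
    ‖f - u'‖ ^ 2 + ∑ i, scadPen a lam (g i u')
      ≤ ‖f - v‖ ^ 2 + ∑ i, scadPen a lam (g i v) :=
  scad_mm_descent_general a lam ha hlam N m f g v u' hmin
end

section
/- The SCAD penalty shrinks less than the TV penalty at large contrasts: if y1 − y2 > aλ (with a > 2 and aλ > λ), the SCAD minimizer (y1, y2) reproduces the data exactly (zero bias), whereas the TV minimizer (y1 − λ/2, y2 + λ/2) satisfies (θ1 − θ2) = (y1 − y2) − λ < y1 − y2; i.e., the difference of the TV-restored values is strictly smaller than the difference of the data values by exactly λ. -/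
/-! Write `s = y1 - y2` and `d = θ1 - θ2`. The fidelity term is at least `(s - d)² / 2`. The SCAD
penalty is constant, equal to `(a + 1)λ²/2`, beyond `aλ`, and below `aλ` it stays above the
parabola `(a + 1)λ²/2 - (aλ - θ)²/2` (this is where `a ≥ 2` enters); since `s > aλ`, the fidelity
term pays for this deficit, so no `(θ1, θ2)` beats the value `(a + 1)λ²/2` attained at the data.
For TV, `(s - d)²/2 + λd = λs - λ²/2 + (s - d - λ)²/2`, minimal at `d = s - λ`. -/

theorem scadPen_of_mul_lt {a lam θ : ℝ} (ha : 1 ≤ a) (hlam : 0 ≤ lam) (hθ : a * lam < θ) :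
    scadPen a lam θ = (a + 1) * lam ^ 2 / 2 := by
  have hθl : lam < θ := by nlinarith
  rw [scadPen, if_neg hθl.not_ge, if_neg hθ.not_ge]

theorem scadPen_ge_of_le_mul {a lam θ : ℝ} (ha : 2 ≤ a) (hθ : θ ≤ a * lam) :
    (a + 1) * lam ^ 2 / 2 - (a * lam - θ) ^ 2 / 2 ≤ scadPen a lam θ := by
  unfold scadPen
  split_ifs with hθl
  · nlinarith [sq_nonneg (θ - (a - 1) * lam), mul_nonneg (sub_nonneg.2 ha) (sq_nonneg lam)]
  · -- on `(λ, aλ]` the deficit is exactly `(aλ - θ)² / (2(a - 1))`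
    rw [le_div_iff₀ (by linarith)]
    nlinarith [mul_nonneg (sub_nonneg.2 ha) (sq_nonneg (a * lam - θ))]

theorem sq_sub_sub_le_two_mul (y1 y2 θ1 θ2 : ℝ) :
    (y1 - y2 - (θ1 - θ2)) ^ 2 ≤ 2 * ((y1 - θ1) ^ 2 + (y2 - θ2) ^ 2) := by
  nlinarith [sq_nonneg (y1 - θ1 + (y2 - θ2))]

theorem scadQ_data_le {a lam y1 y2 : ℝ} (ha : 2 ≤ a) (hlam : 0 ≤ lam)
    (hgap : a * lam < y1 - y2) (θ1 θ2 : ℝ) :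
    scadQ a lam y1 y2 y1 y2 ≤ scadQ a lam y1 y2 θ1 θ2 := by
  have hdata : scadQ a lam y1 y2 y1 y2 = (a + 1) * lam ^ 2 / 2 := by
    rw [scadQ, scadPen_of_mul_lt (by linarith) hlam (hgap.trans_le (le_abs_self _))]
    ring
  have hfid := sq_sub_sub_le_two_mul y1 y2 θ1 θ2
  rw [hdata, scadQ]
  rcases le_or_gt |θ1 - θ2| (a * lam) with hd | hd
  · have hpen := scadPen_ge_of_le_mul ha hd
    have hdeficit : (a * lam - |θ1 - θ2|) ^ 2 ≤ (y1 - y2 - (θ1 - θ2)) ^ 2 :=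
      pow_le_pow_left₀ (by linarith) (by linarith [le_abs_self (θ1 - θ2)]) 2
    linarith
  · rw [scadPen_of_mul_lt (by linarith) hlam hd]
    nlinarith [sq_nonneg (y1 - θ1), sq_nonneg (y2 - θ2)]

theorem tvQ_shift_le {lam y1 y2 : ℝ} (hlam : 0 ≤ lam) (hgap : lam ≤ y1 - y2) (θ1 θ2 : ℝ) :
    tvQ lam y1 y2 (y1 - lam / 2) (y2 + lam / 2) ≤ tvQ lam y1 y2 θ1 θ2 := by
  have hshift : |y1 - lam / 2 - (y2 + lam / 2)| = y1 - y2 - lam := by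
    rw [abs_of_nonneg (by linarith)]
    ring
  have hpen : lam * (θ1 - θ2) ≤ lam * |θ1 - θ2| :=
    mul_le_mul_of_nonneg_left (le_abs_self _) hlam
  rw [tvQ, tvQ, hshift]
  nlinarith [sq_sub_sub_le_two_mul y1 y2 θ1 θ2, sq_nonneg (y1 - y2 - (θ1 - θ2) - lam)]

/-- At large contrasts (`y1 − y2 > aλ`): the SCAD minimizer `(y1, y2)` reproduces the data
exactly (zero bias), whereas the TV minimizer `(y1 − λ/2, y2 + λ/2)` has difference
`(y1 − y2) − λ`, strictly smaller than `y1 − y2` by exactly `λ`. -/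
theorem scad_vs_tv_bias
    (a lam y1 y2 : ℝ) (ha : 2 < a) (hlam : 0 < lam)
    (hgap : a * lam < y1 - y2) :
    (∀ θ1 θ2 : ℝ, scadQ a lam y1 y2 y1 y2 ≤ scadQ a lam y1 y2 θ1 θ2) ∧
    (∀ θ1 θ2 : ℝ,
        tvQ lam y1 y2 (y1 - lam / 2) (y2 + lam / 2) ≤ tvQ lam y1 y2 θ1 θ2) ∧
    (y1 - lam / 2) - (y2 + lam / 2) = (y1 - y2) - lam ∧
    (y1 - y2) - lam < y1 - y2 := by
  have hlam_le : lam ≤ y1 - y2 := by nlinarith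
  exact ⟨scadQ_data_le ha.le hlam.le hgap, tvQ_shift_le hlam.le hlam_le, by ring,
    by linarith⟩
end
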